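/- Let |ψ⟩^{XX'RAJ} = ∑_x √p_x |x⟩^X|x⟩^{X'}|φ_x⟩^{AR}|x⟩^J be a visible-compression source (side information J holds a copy of the label x in an orthonormal basis). Let V^{AJ→JEB} = ∑_x |x⟩⟨x|^J ⊗ V_x^{A→EB} be an isometry preserving J, producing τ̃ = (I ⊗ V)|ψ⟩, and let Λ̃^{X'JRE→F} be any channel with α = S(BF) evaluated on (I^{BX} ⊗ Λ̃)(τ̃). Then there exists a channel 𝒩^{AJ→B} with the same reduced output on BX as τ̃ (hence satisfying the same distortion constraint on BX) and a channel Λ acting on the complementary systems of 𝒩's Stinespring dilation extended over XX'R, such that the resulting S(BF) equals α. Consequently, min over feasible 𝒩 of E_p(XX'R : B) ≤ min over feasible ℳ of E_p(X : B), and combined with the monotonicity of E_p, min_𝒩 E_p(B:XX'R)_τ = min_ℳ E_p(B:X)_τ̃ for visible compression. -/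

import Mathlib

open scoped BigOperators ComplexOrder
open Matrix

noncomputable section
attribute [local instance] Classical.propDecidable

/-- `-x log₂ x`, extended by `0` for non-positive `x`. -/
def negxlog2 (x : ℝ) : ℝ := if x ≤ 0 then 0 else -(x * Real.logb 2 x)

/-- Von Neumann entropy (base 2) of a matrix, via eigenvalues of a Hermitian matrix
(junk value `0` on non-Hermitian matrices). -/
def entropy {n : Type} [Fintype n] [DecidableEq n] (M : Matrix n n ℂ) : ℝ :=
  if h : M.IsHermitian then ∑ i, negxlog2 (h.eigenvalues i) else 0

/-- Partial trace over the right (second) factor. -/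
def ptraceRight {A R : Type} [Fintype A] [Fintype R]
    (M : Matrix (A × R) (A × R) ℂ) : Matrix A A ℂ :=
  Matrix.of fun a a' => ∑ r, M (a, r) (a', r)

/-- Partial trace over the left (first) factor. -/
def ptraceLeft {A R : Type} [Fintype A] [Fintype R]
    (M : Matrix (A × R) (A × R) ℂ) : Matrix R R ℂ :=
  Matrix.of fun r r' => ∑ a, M (a, r) (a, r')

/-- Quantum mutual information `I(A:R) = S(A) + S(R) - S(AR)` of a bipartite matrix. -/
def mutualInfo {A R : Type} [Fintype A] [DecidableEq A] [Fintype R] [DecidableEq R]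
    (M : Matrix (A × R) (A × R) ℂ) : ℝ :=
  entropy (ptraceRight M) + entropy (ptraceLeft M) - entropy M

/-- The extension `Φ ⊗ id_n` of a linear map on matrices, applied entrywise. -/
def matExt {A B n : Type} [Fintype A] [Fintype B] [Fintype n]
    (Φ : Matrix A A ℂ →ₗ[ℂ] Matrix B B ℂ) (M : Matrix (A × n) (A × n) ℂ) :
    Matrix (B × n) (B × n) ℂ :=
  Matrix.of fun p q => Φ (Matrix.of fun a a' => M (a, p.2) (a', q.2)) p.1 q.1

/-- A linear map on matrices is a quantum channel if it is completely positive
(all extensions preserve positive semidefiniteness) and trace preserving. -/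
def IsQChannel {A B : Type} [Fintype A] [Fintype B]
    (Φ : Matrix A A ℂ →ₗ[ℂ] Matrix B B ℂ) : Prop :=
  (∀ (n : Type) [Fintype n], ∀ M : Matrix (A × n) (A × n) ℂ,
      M.PosSemidef → (matExt Φ M).PosSemidef) ∧
  ∀ M : Matrix A A ℂ, (Φ M).trace = M.trace

/-- Density matrix predicate. -/
def IsDensity {n : Type} [Fintype n] (M : Matrix n n ℂ) : Prop :=
  M.PosSemidef ∧ M.trace = 1

/-- The rank-one matrix `|v⟩⟨v|`. -/
def pureMat {d : Type} (v : d → ℂ) : Matrix d d ℂ :=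
  Matrix.of fun i j => v i * (starRingEnd ℂ) (v j)

/-- `ψ` (a vector on `A ⊗ A' ⊗ R`) purifies the bipartite state `ρ` on `A ⊗ R`. -/
def Purifies {A A' R : Type} [Fintype A'] (ψ : A × A' × R → ℂ)
    (ρ : Matrix (A × R) (A × R) ℂ) : Prop :=
  ∀ a r a' r', ρ (a, r) (a', r') = ∑ x, ψ (a, x, r) * (starRingEnd ℂ) (ψ (a', x, r'))

/-- The state on `A ⊗ A''` obtained from the purification `ψ` by applying `Φ` to the
purifying system `A'` and tracing out `R`. -/
def epOut {A A' A'' R : Type} [Fintype A] [Fintype A'] [Fintype A''] [Fintype R]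
    (ψ : A × A' × R → ℂ) (Φ : Matrix A' A' ℂ →ₗ[ℂ] Matrix A'' A'' ℂ) :
    Matrix (A × A'') (A × A'') ℂ :=
  Matrix.of fun p q => ∑ r, Φ (Matrix.of fun x x' =>
      ψ (p.1, x, r) * (starRingEnd ℂ) (ψ (q.1, x', r))) p.2 q.2

/-- Witness predicate for the entanglement of purification. -/
def EpWitness {A R : Type} [Fintype A] [DecidableEq A] [Fintype R]
    (ρ : Matrix (A × R) (A × R) ℂ) (e : ℝ)
    (A' A'' : Type) [Fintype A'] [Fintype A''] [DecidableEq A''] : Prop :=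
  ∃ (ψ : A × A' × R → ℂ) (Φ : Matrix A' A' ℂ →ₗ[ℂ] Matrix A'' A'' ℂ),
    Purifies ψ ρ ∧ IsQChannel Φ ∧ e = entropy (epOut ψ Φ)

/-- Entanglement of purification `E_p(A:R)` of a bipartite matrix: the infimum of
`S(A A'')` over purifications and channels applied to the purifying system. -/
def Ep {A R : Type} [Fintype A] [DecidableEq A] [Fintype R]
    (ρ : Matrix (A × R) (A × R) ℂ) : ℝ :=
  sInf { e : ℝ | ∃ (A' A'' : Type) (i1 : Fintype A') (i2 : Fintype A'')
      (i3 : DecidableEq A''), @EpWitness A R _ _ _ ρ e A' A'' i1 i2 i3 }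

/-- Square root of a positive semidefinite matrix (the former `Matrix.PosSemidef.sqrt`). -/
def psdSqrt {n : Type} [Fintype n] [DecidableEq n] {M : Matrix n n ℂ} (hM : M.PosSemidef) :
    Matrix n n ℂ :=
  hM.1.eigenvectorUnitary.1 * diagonal ((↑) ∘ Real.sqrt ∘ hM.1.eigenvalues) *
    (star hM.1.eigenvectorUnitary : Matrix n n ℂ)

/-- Fidelity `F(ρ,σ) = (tr √(√ρ σ √ρ))²` (junk value `0` off positive semidefinite pairs). -/
def fidelity {n : Type} [Fintype n] [DecidableEq n] (ρ σ : Matrix n n ℂ) : ℝ :=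
  if h : ρ.PosSemidef ∧ σ.PosSemidef then
    if h2 : (psdSqrt h.1 * σ * psdSqrt h.1).PosSemidef then ((psdSqrt h2).trace.re) ^ 2 else 0
  else 0

variable {A R B X : Type}

/-- Purification of the visible-compression source
`|ψ⟩ = ∑ₓ √pₓ |x⟩^X |x⟩^{X'} |φₓ⟩^{AR} |x⟩^J`; first component: the encoder's input
`A ⊗ J` (with `J = X`), second component: the references `X ⊗ X' ⊗ R`. -/
def visVec (p : X → ℝ) (φ : X → A × R → ℂ) : (A × X) × (X × (X × R)) → ℂ :=
  fun u =>
    if u.1.2 = u.2.1 ∧ u.2.2.1 = u.2.1 then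
      ((Real.sqrt (p u.2.1) : ℝ) : ℂ) * φ u.2.1 (u.1.1, u.2.2.2)
    else 0

/-- Marginal on `B ⊗ X` of a state on `B ⊗ (X ⊗ X' ⊗ R)` (tracing out `X'` and `R`). -/
def visMargBX [Fintype B] [Fintype X] [Fintype R]
    (M : Matrix (B × (X × (X × R))) (B × (X × (X × R))) ℂ) :
    Matrix (B × X) (B × X) ℂ :=
  Matrix.of fun p q =>
    ∑ x' : X, ∑ r : R, M (p.1, (p.2, (x', r))) (q.1, (q.2, (x', r)))

namespace VisAux

lemma psd_add {I : Type} [Fintype I] {M N : Matrix I I ℂ} (hM : M.PosSemidef) (hN : N.PosSemidef) :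
    (M + N).PosSemidef := by
  exact hM.add hN

lemma psd_sum {I K : Type} [Fintype I] {F : K → Matrix I I ℂ} (s : Finset K)
    (h : ∀ k, (F k).PosSemidef) : (∑ k ∈ s, F k).PosSemidef := by
  classical
  induction s using Finset.induction with
  | empty => simpa using Matrix.PosSemidef.zero
  | insert _ _ hk ih => rw [Finset.sum_insert hk]; exact psd_add (h _) ih

lemma masterPSD {I J K : Type} [Fintype I] [Fintype J] [Fintype K]
    {M : Matrix J J ℂ} (hM : M.PosSemidef) (f : I → K → ℂ) (g : I → K → J) :
    (Matrix.of fun i i' : I =>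
      ∑ k, f i k * (starRingEnd ℂ) (f i' k) * M (g i k) (g i' k)).PosSemidef := by
  classical
  have key : (Matrix.of fun i i' : I =>
      ∑ k, f i k * (starRingEnd ℂ) (f i' k) * M (g i k) (g i' k))
      = ∑ k : K, (Matrix.of fun i j => if g i k = j then f i k else 0) * M *
          (Matrix.of fun i j => if g i k = j then f i k else 0)ᴴ := by
    ext i i'
    rw [Matrix.sum_apply]
    simp only [Matrix.of_apply]
    refine Finset.sum_congr rfl fun k _ => ?_
    rw [Matrix.mul_apply]
    have : ∀ j', (Matrix.of (fun i j => if g i k = j then f i k else 0) * M) i j' =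
        f i k * M (g i k) j' := by
      intro j'
      rw [Matrix.mul_apply]
      simp [Finset.sum_ite_eq, Matrix.of_apply]
    simp only [this, Matrix.conjTranspose_apply, Matrix.of_apply]
    simp only [apply_ite (star : ℂ → ℂ), star_zero]
    simp only [mul_ite, mul_zero, Finset.sum_ite_eq]
    simp only [Finset.mem_univ, if_true]
    rw [RCLike.star_def]
    ring
  rw [key]
  exact psd_sum _ fun k => hM.mul_mul_conjTranspose_same _

lemma pureMat_psd {d : Type} [Fintype d] (v : d → ℂ) : (pureMat v).PosSemidef := by
  have e : pureMat v = Matrix.of fun i i' : d =>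
      ∑ _k : Unit, v i * (starRingEnd ℂ) (v i') * (1 : Matrix Unit Unit ℂ) () () := by
    ext i j
    simp [pureMat]
  rw [e]
  exact masterPSD Matrix.PosSemidef.one _ _

lemma sum_conj_of_norm {n : Type} [Fintype n] {v : n → ℂ} (h : ∑ z, ‖v z‖ ^ 2 = 1) :
    ∑ z, v z * (starRingEnd ℂ) (v z) = 1 := by
  have e1 : ∀ z, v z * (starRingEnd ℂ) (v z) = ((‖v z‖ ^ 2 : ℝ) : ℂ) := by
    intro z
    rw [Complex.mul_conj]
    norm_cast
    rw [Complex.normSq_eq_norm_sq]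
  rw [Finset.sum_congr rfl fun z _ => e1 z]
  exact_mod_cast h

lemma herm_entry {n : Type} [Fintype n] [DecidableEq n] {M : Matrix n n ℂ} (h : M.IsHermitian)
    (i j : n) :
    M i j = ∑ k, (h.eigenvectorUnitary : Matrix n n ℂ) i k * (h.eigenvalues k : ℂ) *
      (starRingEnd ℂ) ((h.eigenvectorUnitary : Matrix n n ℂ) j k) := by
  conv_lhs => rw [h.spectral_theorem, Unitary.conjStarAlgAut_apply]
  rw [Matrix.mul_apply]
  refine Finset.sum_congr rfl fun k _ => ?_
  rw [Matrix.mul_apply, Finset.sum_eq_single k]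
  · rw [Matrix.diagonal_apply_eq, Matrix.star_apply]
    simp only [Function.comp_apply, Matrix.star_apply, RCLike.star_def, RCLike.ofReal,
      Complex.coe_algebraMap]
  · intro b _ hb; rw [Matrix.diagonal_apply_ne _ hb]; ring
  · simp

lemma trace_eq_sum_eigen {n : Type} [Fintype n] [DecidableEq n] {M : Matrix n n ℂ}
    (h : M.IsHermitian) : M.trace = ∑ i, (h.eigenvalues i : ℂ) := by
  conv_lhs => rw [h.spectral_theorem, Unitary.conjStarAlgAut_apply]
  rw [Matrix.trace_mul_comm, ← Matrix.mul_assoc]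
  have h1 : (star (h.eigenvectorUnitary : Matrix n n ℂ)) * (h.eigenvectorUnitary : Matrix n n ℂ) = 1 :=
    Matrix.mem_unitaryGroup_iff'.mp (h.eigenvectorUnitary).2
  rw [h1, Matrix.one_mul, Matrix.trace_diagonal]
  rfl

lemma entropy_nonneg {n : Type} [Fintype n] [DecidableEq n] {M : Matrix n n ℂ}
    (h1 : M.PosSemidef) (h2 : M.trace = 1) : 0 ≤ entropy M := by
  rw [entropy, dif_pos h1.1]
  have hsum : ∑ i, h1.1.eigenvalues i = 1 := by
    have h3 := trace_eq_sum_eigen h1.1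
    rw [h2] at h3
    exact_mod_cast h3.symm
  refine Finset.sum_nonneg fun i _ => ?_
  unfold negxlog2
  split
  · exact le_rfl
  · next hpos =>
    push_neg at hpos
    have hle : h1.1.eigenvalues i ≤ 1 := by
      rw [← hsum]
      exact Finset.single_le_sum (fun j _ => h1.eigenvalues_nonneg j) (Finset.mem_univ i)
    have hlog : Real.logb 2 (h1.1.eigenvalues i) ≤ 0 :=
      Real.logb_nonpos one_lt_two hpos.le hle
    exact neg_nonneg.mpr (mul_nonpos_of_nonneg_of_nonpos hpos.le hlog)

lemma exists_purif {A R : Type} [Fintype A] [DecidableEq A] [Fintype R] [DecidableEq R]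
    {ρ : Matrix (A × R) (A × R) ℂ} (h : ρ.PosSemidef) :
    ∃ ψ : A × (A × R) × R → ℂ, Purifies ψ ρ := by
  refine ⟨fun q => (h.1.eigenvectorUnitary : Matrix (A × R) (A × R) ℂ) (q.1, q.2.2) q.2.1 *
    ((Real.sqrt (h.1.eigenvalues q.2.1) : ℝ) : ℂ), ?_⟩
  intro a r a' r'
  rw [herm_entry h.1 (a, r) (a', r')]
  refine Finset.sum_congr rfl fun k _ => ?_
  have hs : ((Real.sqrt (h.1.eigenvalues k) : ℝ) : ℂ) * ((Real.sqrt (h.1.eigenvalues k) : ℝ) : ℂ)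
      = (h.1.eigenvalues k : ℂ) := by
    rw [← Complex.ofReal_mul, Real.mul_self_sqrt (h.eigenvalues_nonneg k)]
  rw [_root_.map_mul, Complex.conj_ofReal, ← hs]
  ring

lemma matExt_comp {A B C n : Type} [Fintype A] [Fintype B] [Fintype C] [Fintype n]
    (Φ : Matrix B B ℂ →ₗ[ℂ] Matrix C C ℂ) (T : Matrix A A ℂ →ₗ[ℂ] Matrix B B ℂ)
    (M : Matrix (A × n) (A × n) ℂ) : matExt (Φ.comp T) M = matExt Φ (matExt T M) := rfl

lemma qchannel_comp {A B C : Type} [Fintype A] [Fintype B] [Fintype C]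
    {Φ : Matrix B B ℂ →ₗ[ℂ] Matrix C C ℂ} {T : Matrix A A ℂ →ₗ[ℂ] Matrix B B ℂ}
    (hΦ : IsQChannel Φ) (hT : IsQChannel T) : IsQChannel (Φ.comp T) := by
  constructor
  · intro n _ M hM
    rw [matExt_comp]
    exact hΦ.1 n _ (hT.1 n M hM)
  · intro M
    simp only [LinearMap.comp_apply]
    rw [hΦ.2, hT.2]

lemma qchannel_id {A : Type} [Fintype A] : IsQChannel (LinearMap.id : Matrix A A ℂ →ₗ[ℂ] Matrix A A ℂ) := by
  constructor
  · intro n _ M hM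
    have : matExt (LinearMap.id : Matrix A A ℂ →ₗ[ℂ] Matrix A A ℂ) M = M := by
      ext ⟨a, m⟩ ⟨a', m'⟩
      rfl
    rwa [this]
  · intro M; rfl

def trRmap (A' K : Type) [Fintype A'] [Fintype K] :
    Matrix (A' × K) (A' × K) ℂ →ₗ[ℂ] Matrix A' A' ℂ where
  toFun := ptraceRight
  map_add' M N := by
    ext a a'
    simp [ptraceRight, Finset.sum_add_distrib]
  map_smul' c M := by
    ext a a'
    simp [ptraceRight, Finset.mul_sum]

lemma trRmap_channel {A' K : Type} [Fintype A'] [Fintype K] : IsQChannel (trRmap A' K) := by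
  constructor
  · intro n _ M hM
    have key := masterPSD hM (f := fun (_ : A' × n) (_ : K) => (1 : ℂ))
      (g := fun (i : A' × n) (k : K) => ((i.1, k), i.2))
    have e : matExt (trRmap A' K) M = Matrix.of fun i i' : A' × n =>
        ∑ k : K, (1 : ℂ) * (starRingEnd ℂ) (1 : ℂ) * M ((i.1, k), i.2) ((i'.1, k), i'.2) := by
      ext ⟨a, m⟩ ⟨a', m'⟩
      simp [matExt, trRmap, ptraceRight]
    rw [e]
    exact key
  · intro M
    simp only [trRmap, LinearMap.coe_mk, AddHom.coe_mk]
    simp only [Matrix.trace, Matrix.diag, ptraceRight, Matrix.of_apply]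
    rw [Fintype.sum_prod_type]

lemma trace_matExt {A B n : Type} [Fintype A] [Fintype B] [Fintype n]
    {Φ : Matrix A A ℂ →ₗ[ℂ] Matrix B B ℂ} (hΦ : ∀ M : Matrix A A ℂ, (Φ M).trace = M.trace)
    (M : Matrix (A × n) (A × n) ℂ) : (matExt Φ M).trace = M.trace := by
  simp only [Matrix.trace, Matrix.diag, matExt, Matrix.of_apply]
  rw [Fintype.sum_prod_type, Finset.sum_comm]
  have e : ∀ m : n, ∑ b : B, Φ (Matrix.of fun a a' => M (a, m) (a', m)) b b
      = ∑ a : A, M (a, m) (a, m) := by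
    intro m
    have := hΦ (Matrix.of fun a a' => M (a, m) (a', m))
    simpa [Matrix.trace, Matrix.diag] using this
  rw [Finset.sum_congr rfl fun m _ => e m, Fintype.sum_prod_type, Finset.sum_comm]

lemma trace_visMargBX {B X R : Type} [Fintype B] [Fintype X] [Fintype R]
    (M : Matrix (B × (X × (X × R))) (B × (X × (X × R))) ℂ) :
    (visMargBX M).trace = M.trace := by
  simp only [Matrix.trace, Matrix.diag, visMargBX, Matrix.of_apply]
  rw [Fintype.sum_prod_type, Fintype.sum_prod_type]
  refine Finset.sum_congr rfl fun b _ => ?_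
  rw [Fintype.sum_prod_type]
  refine Finset.sum_congr rfl fun x _ => ?_
  rw [Fintype.sum_prod_type]

lemma epOut_psd {A A' A'' R : Type} [Fintype A] [Fintype A'] [Fintype A''] [Fintype R]
    (ψ : A × A' × R → ℂ) {Φ : Matrix A' A' ℂ →ₗ[ℂ] Matrix A'' A'' ℂ}
    (hΦ : IsQChannel Φ) : (epOut ψ Φ).PosSemidef := by
  have h0 : (pureMat (fun q : A' × (A × R) => ψ (q.2.1, q.1, q.2.2))).PosSemidef := pureMat_psd _
  have h1 := hΦ.1 (A × R) _ h0
  have key := masterPSD h1 (f := fun (_ : A × A'') (_ : R) => (1 : ℂ))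
    (g := fun (i : A × A'') (r : R) => (i.2, (i.1, r)))
  have e : epOut ψ Φ = Matrix.of fun i i' : A × A'' =>
      ∑ r : R, (1 : ℂ) * (starRingEnd ℂ) (1 : ℂ) *
        (matExt Φ (pureMat (fun q : A' × (A × R) => ψ (q.2.1, q.1, q.2.2))))
          (i.2, (i.1, r)) (i'.2, (i'.1, r)) := by
    ext ⟨a, c⟩ ⟨a', c'⟩
    simp [epOut, matExt, pureMat]
  rw [e]
  exact key

lemma epOut_trace {A A' A'' R : Type} [Fintype A] [Fintype A'] [Fintype A''] [Fintype R]
    {ψ : A × A' × R → ℂ} {ρ : Matrix (A × R) (A × R) ℂ}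
    {Φ : Matrix A' A' ℂ →ₗ[ℂ] Matrix A'' A'' ℂ}
    (hψ : Purifies ψ ρ) (hΦ : ∀ M : Matrix A' A' ℂ, (Φ M).trace = M.trace)
    (hρ : ρ.trace = 1) : (epOut ψ Φ).trace = 1 := by
  simp only [Matrix.trace, Matrix.diag, epOut, Matrix.of_apply]
  rw [Fintype.sum_prod_type]
  have e : ∀ a : A, (∑ c : A'', ∑ r : R, Φ (Matrix.of fun x x' =>
      ψ (a, x, r) * (starRingEnd ℂ) (ψ (a, x', r))) c c) = ∑ r : R, ρ (a, r) (a, r) := by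
    intro a
    rw [Finset.sum_comm]
    refine Finset.sum_congr rfl fun r _ => ?_
    have h2 := hΦ (Matrix.of fun x x' => ψ (a, x, r) * (starRingEnd ℂ) (ψ (a, x', r)))
    simp only [Matrix.trace, Matrix.diag, Matrix.of_apply] at h2
    rw [h2, hψ a r a r]
  rw [Finset.sum_congr rfl fun a _ => e a]
  have e2 : ρ.trace = ∑ a : A, ∑ r : R, ρ (a, r) (a, r) := by
    simp [Matrix.trace, Matrix.diag, Fintype.sum_prod_type]
  rw [← e2, hρ]

def EpSet {A R : Type} [Fintype A] [DecidableEq A] [Fintype R]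
    (ρ : Matrix (A × R) (A × R) ℂ) : Set ℝ :=
  { e : ℝ | ∃ (A' A'' : Type) (i1 : Fintype A') (i2 : Fintype A'')
      (i3 : DecidableEq A''), @EpWitness A R _ _ _ ρ e A' A'' i1 i2 i3 }

lemma Ep_eq_sInf {A R : Type} [Fintype A] [DecidableEq A] [Fintype R]
    (ρ : Matrix (A × R) (A × R) ℂ) : Ep ρ = sInf (EpSet ρ) := rfl

lemma EpSet_nonneg {A R : Type} [Fintype A] [DecidableEq A] [Fintype R]
    {ρ : Matrix (A × R) (A × R) ℂ} (hρ : ρ.trace = 1) :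
    ∀ e ∈ EpSet ρ, 0 ≤ e := by
  rintro e ⟨A', A'', i1, i2, i3, ψ, Φ, hψ, hΦ, rfl⟩
  exact entropy_nonneg (epOut_psd ψ hΦ) (epOut_trace hψ hΦ.2 hρ)

lemma EpSet_bdd {A R : Type} [Fintype A] [DecidableEq A] [Fintype R]
    {ρ : Matrix (A × R) (A × R) ℂ} (hρ : ρ.trace = 1) : BddBelow (EpSet ρ) :=
  ⟨0, fun e he => EpSet_nonneg hρ e he⟩

lemma Ep_nonneg {A R : Type} [Fintype A] [DecidableEq A] [Fintype R]
    {ρ : Matrix (A × R) (A × R) ℂ} (hρ : ρ.trace = 1) : 0 ≤ Ep ρ :=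
  Real.sInf_nonneg (EpSet_nonneg hρ)

lemma EpSet_nonempty {A R : Type} [Fintype A] [DecidableEq A] [Fintype R] [DecidableEq R]
    {ρ : Matrix (A × R) (A × R) ℂ} (h : ρ.PosSemidef) : (EpSet ρ).Nonempty := by
  obtain ⟨ψ, hψ⟩ := exists_purif h
  exact ⟨entropy (epOut ψ (LinearMap.id : Matrix (A × R) (A × R) ℂ →ₗ[ℂ] Matrix (A × R) (A × R) ℂ)),
    A × R, A × R, inferInstance, inferInstance, inferInstance, ψ, LinearMap.id, hψ, qchannel_id, rfl⟩

lemma visMargBX_psd {B X R : Type} [Fintype B] [Fintype X] [Fintype R]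
    {M : Matrix (B × (X × (X × R))) (B × (X × (X × R))) ℂ} (h : M.PosSemidef) :
    (visMargBX M).PosSemidef := by
  have key := masterPSD h (f := fun (_ : B × X) (_ : X × R) => (1 : ℂ))
    (g := fun (i : B × X) (k : X × R) => (i.1, (i.2, k)))
  have e : visMargBX M = Matrix.of fun i i' : B × X =>
      ∑ k : X × R, (1 : ℂ) * (starRingEnd ℂ) (1 : ℂ) *
        M (i.1, (i.2, k)) (i'.1, (i'.2, k)) := by
    ext ⟨b, x⟩ ⟨b', y⟩
    simp [visMargBX, Fintype.sum_prod_type]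
  rw [e]
  exact key

/-- Monotonicity direction: every Ep witness for the full state gives a witness
with the same value for the `BX` marginal. -/
lemma epset_full_subset_marg {B X R : Type} [Fintype B] [DecidableEq B]
    [Fintype X] [DecidableEq X] [Fintype R]
    (M : Matrix (B × (X × (X × R))) (B × (X × (X × R))) ℂ) :
    EpSet M ⊆ EpSet (visMargBX M) := by
  rintro e ⟨A', A'', i1, i2, i3, ψ, Φ', hψ, hΦ', rfl⟩
  refine ⟨A' × (X × R), A'', inferInstance, i2, i3,
    (fun q : B × (A' × (X × R)) × X => ψ (q.1, q.2.1.1, (q.2.2, q.2.1.2))),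
    Φ'.comp (trRmap A' (X × R)), ?_, qchannel_comp hΦ' trRmap_channel, ?_⟩
  · intro b x b' y
    have e1 : visMargBX M (b, x) (b', y)
        = ∑ x' : X, ∑ r : R, ∑ c : A',
            ψ (b, c, (x, (x', r))) * (starRingEnd ℂ) (ψ (b', c, (y, (x', r)))) := by
      simp only [visMargBX, Matrix.of_apply]
      exact Finset.sum_congr rfl fun x' _ => Finset.sum_congr rfl fun r _ =>
        hψ b (x, (x', r)) b' (y, (x', r))
    rw [e1]
    calc ∑ x' : X, ∑ r : R, ∑ c : A',
            ψ (b, c, (x, (x', r))) * (starRingEnd ℂ) (ψ (b', c, (y, (x', r))))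
        = ∑ x' : X, ∑ c : A', ∑ r : R,
            ψ (b, c, (x, (x', r))) * (starRingEnd ℂ) (ψ (b', c, (y, (x', r)))) :=
          Finset.sum_congr rfl (fun x' _ => Finset.sum_comm)
      _ = ∑ c : A', ∑ x' : X, ∑ r : R,
            ψ (b, c, (x, (x', r))) * (starRingEnd ℂ) (ψ (b', c, (y, (x', r)))) :=
          Finset.sum_comm
      _ = ∑ u : A' × (X × R),
            ψ (b, u.1, (x, u.2)) * (starRingEnd ℂ) (ψ (b', u.1, (y, u.2))) := by
          rw [Fintype.sum_prod_type]
          exact Finset.sum_congr rfl fun c _ => by rw [Fintype.sum_prod_type]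
  · congr 1
    ext ⟨b, c⟩ ⟨b', c'⟩
    simp only [epOut, Matrix.of_apply, LinearMap.coe_comp, Function.comp_apply]
    rw [Fintype.sum_prod_type]
    refine Finset.sum_congr rfl fun x _ => ?_
    have e3 : trRmap A' (X × R) (Matrix.of fun (u u' : A' × (X × R)) =>
          ψ (b, u.1, (x, u.2)) * (starRingEnd ℂ) (ψ (b', u'.1, (x, u'.2))))
        = ∑ w : X × R, Matrix.of fun c1 c2 : A' =>
            ψ (b, c1, (x, w)) * (starRingEnd ℂ) (ψ (b', c2, (x, w))) := by
      ext c1 c2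
      simp [trRmap, ptraceRight, Matrix.sum_apply]
    rw [e3, map_sum, Matrix.sum_apply]

variable {A R X : Type}

/-- `Tr_R |phi_x><phi_x| tensor |x><x|` on `A tensor J`. -/
def sig [Fintype R] (φ : X → A × R → ℂ) (x : X) : Matrix (A × X) (A × X) ℂ :=
  Matrix.of fun u v => if u.2 = x ∧ v.2 = x then
    ∑ r, φ x (u.1, r) * (starRingEnd ℂ) (φ x (v.1, r)) else 0

/-- The measure-`J`-and-regenerate channel. -/
def prep [Fintype A] [Fintype X] [Fintype R] (φ : X → A × R → ℂ) :
    Matrix (A × X) (A × X) ℂ →ₗ[ℂ] Matrix (A × X) (A × X) ℂ where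
  toFun M := ∑ x, (∑ a, M (a, x) (a, x)) • sig φ x
  map_add' M N := by
    simp only [Matrix.add_apply, Finset.sum_add_distrib, add_smul]
  map_smul' c M := by
    simp only [Matrix.smul_apply, smul_eq_mul, RingHom.id_apply]
    rw [Finset.smul_sum]
    refine Finset.sum_congr rfl fun x _ => ?_
    rw [← Finset.mul_sum, smul_smul]

lemma sig_trace [Fintype A] [Fintype R] [Fintype X] {φ : X → A × R → ℂ}
    (hφ : ∀ x, ∑ z, ‖φ x z‖ ^ 2 = 1) (x : X) : (sig φ x).trace = 1 := by
  have hn := sum_conj_of_norm (hφ x)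
  rw [Fintype.sum_prod_type] at hn
  simp only [Matrix.trace, Matrix.diag, sig, Matrix.of_apply, and_self]
  rw [Fintype.sum_prod_type, Finset.sum_comm]
  have e : ∀ y : X, (∑ a : A, if ((a, y) : A × X).2 = x then
      ∑ r : R, φ x (((a, y) : A × X).1, r) * (starRingEnd ℂ) (φ x (((a, y) : A × X).1, r)) else 0)
      = if y = x then ∑ a : A, ∑ r : R, φ x (a, r) * (starRingEnd ℂ) (φ x (a, r)) else 0 := by
    intro y
    by_cases h : y = x
    · simp [h]
    · simp [h]
  rw [Finset.sum_congr rfl fun y _ => e y, Finset.sum_ite_eq' Finset.univ x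
    (fun _ => ∑ a : A, ∑ r : R, φ x (a, r) * (starRingEnd ℂ) (φ x (a, r)))]
  rw [if_pos (Finset.mem_univ x)]
  exact hn

lemma prep_qchannel [Fintype A] [Fintype X] [Fintype R] {φ : X → A × R → ℂ}
    (hφ : ∀ x, ∑ z, ‖φ x z‖ ^ 2 = 1) : IsQChannel (prep φ) := by
  constructor
  · intro n _ M hM
    have key := masterPSD hM
      (f := fun (i : (A × X) × n) (k : X × R × A) => if i.1.2 = k.1 then φ k.1 (i.1.1, k.2.1) else 0)
      (g := fun (i : (A × X) × n) (k : X × R × A) => ((k.2.2, k.1), i.2))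
    have e : matExt (prep φ) M = Matrix.of fun i i' : (A × X) × n =>
        ∑ k : X × R × A,
          (if i.1.2 = k.1 then φ k.1 (i.1.1, k.2.1) else 0) *
          (starRingEnd ℂ) (if i'.1.2 = k.1 then φ k.1 (i'.1.1, k.2.1) else 0) *
          M ((k.2.2, k.1), i.2) ((k.2.2, k.1), i'.2) := by
      ext ⟨⟨a, z⟩, m⟩ ⟨⟨a', z'⟩, m'⟩
      simp only [matExt, Matrix.of_apply, prep, LinearMap.coe_mk, AddHom.coe_mk,
        Matrix.sum_apply, Matrix.smul_apply, smul_eq_mul, sig]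
      rw [Fintype.sum_prod_type]
      refine Finset.sum_congr rfl fun x _ => ?_
      by_cases h1 : z = x
      · by_cases h2 : z' = x
        · simp only [h1, h2, eq_self_iff_true, if_true, and_self]
          calc (∑ a₂ : A, M ((a₂, x), m) ((a₂, x), m')) *
                (∑ r : R, φ x (a, r) * (starRingEnd ℂ) (φ x (a', r)))
              = ∑ r : R, (φ x (a, r) * (starRingEnd ℂ) (φ x (a', r))) *
                  ∑ a₂ : A, M ((a₂, x), m) ((a₂, x), m') := by
                rw [Finset.mul_sum]
                exact Finset.sum_congr rfl fun r _ => mul_comm _ _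
            _ = ∑ r : R, ∑ a₂ : A, φ x (a, r) * (starRingEnd ℂ) (φ x (a', r)) *
                  M ((a₂, x), m) ((a₂, x), m') :=
                Finset.sum_congr rfl fun r _ => Finset.mul_sum _ _ _
            _ = ∑ w : R × A, φ x (a, w.1) * (starRingEnd ℂ) (φ x (a', w.1)) *
                  M ((w.2, x), m) ((w.2, x), m') := by
                rw [Fintype.sum_prod_type]
        · simp [h1, h2]
      · simp [h1]
    rw [e]
    exact key
  · intro M
    simp only [prep, LinearMap.coe_mk, AddHom.coe_mk]
    rw [Matrix.trace_sum]
    simp only [Matrix.trace_smul, smul_eq_mul, sig_trace hφ, mul_one]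
    simp only [Matrix.trace, Matrix.diag]
    rw [Fintype.sum_prod_type, Finset.sum_comm]

lemma marg_entry {B : Type} [Fintype A] [Fintype R] [Fintype X] [Fintype B]
    (p : X → ℝ) (hp : ∀ x, 0 ≤ p x) (φ : X → A × R → ℂ)
    (Φ : Matrix (A × X) (A × X) ℂ →ₗ[ℂ] Matrix B B ℂ) (b b' : B) (x y : X) :
    visMargBX (matExt Φ (pureMat (visVec p φ))) (b, x) (b', y)
      = if x = y then (p x : ℂ) * Φ (sig φ x) b b' else 0 := by
  simp only [visMargBX, matExt, Matrix.of_apply]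
  by_cases hxy : x = y
  · subst hxy
    rw [if_pos rfl]
    rw [Finset.sum_eq_single x]
    · have hsum : (∑ r : R, Matrix.of fun u u' : A × X =>
            pureMat (visVec p φ) (u, (x, (x, r))) (u', (x, (x, r))))
          = (p x : ℂ) • sig φ x := by
        ext ⟨a2, z⟩ ⟨a2', z'⟩
        simp only [Matrix.sum_apply, Matrix.of_apply, pureMat, visVec, Matrix.smul_apply,
          smul_eq_mul, sig]
        by_cases h1 : z = x
        · by_cases h2 : z' = x
          · simp only [h1, h2, eq_self_iff_true, and_self, if_true]
            rw [Finset.mul_sum]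
            refine Finset.sum_congr rfl fun r _ => ?_
            rw [_root_.map_mul, Complex.conj_ofReal]
            rw [show ((Real.sqrt (p x) : ℝ) : ℂ) * φ x (a2, r) *
              (((Real.sqrt (p x) : ℝ) : ℂ) * (starRingEnd ℂ) (φ x (a2', r)))
              = (((Real.sqrt (p x) : ℝ) : ℂ) * ((Real.sqrt (p x) : ℝ) : ℂ)) *
                (φ x (a2, r) * (starRingEnd ℂ) (φ x (a2', r))) from by ring]
            rw [← Complex.ofReal_mul, Real.mul_self_sqrt (hp x)]
          · simp [h1, h2]
        · simp [h1]
      calc ∑ r : R, Φ (Matrix.of fun u u' : A × X =>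
              pureMat (visVec p φ) (u, (x, (x, r))) (u', (x, (x, r)))) b b'
          = Φ (∑ r : R, Matrix.of fun u u' : A × X =>
              pureMat (visVec p φ) (u, (x, (x, r))) (u', (x, (x, r)))) b b' := by
            rw [map_sum, Matrix.sum_apply]
        _ = (p x : ℂ) * Φ (sig φ x) b b' := by
            rw [hsum, _root_.map_smul, Matrix.smul_apply, smul_eq_mul]
    · intro x' _ hx'
      refine Finset.sum_eq_zero fun r _ => ?_
      have hz : (Matrix.of fun u u' : A × X =>
          pureMat (visVec p φ) (u, (x, (x', r))) (u', (x, (x', r)))) = 0 := by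
        ext ⟨a2, z⟩ ⟨a2', z'⟩
        simp [pureMat, visVec, hx']
      rw [hz, map_zero]
      simp
    · simp
  · rw [if_neg hxy]
    refine Finset.sum_eq_zero fun x' _ => Finset.sum_eq_zero fun r _ => ?_
    have hz : (Matrix.of fun u u' : A × X =>
        pureMat (visVec p φ) (u, (x, (x', r))) (u', (y, (x', r)))) = 0 := by
      ext ⟨a2, z⟩ ⟨a2', z'⟩
      simp only [Matrix.of_apply, pureMat, visVec, Matrix.zero_apply]
      by_cases h1 : x' = x
      · have h3 : ¬ x' = y := fun h => hxy (h1.symm.trans h)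
        simp [h3]
      · simp [h1]
    rw [hz, map_zero]
    simp

lemma tauN_entry {B : Type} [Fintype A] [Fintype R] [Fintype X] [Fintype B]
    (p : X → ℝ) (hp : ∀ x, 0 ≤ p x) (φ : X → A × R → ℂ)
    (Φ : Matrix (A × X) (A × X) ℂ →ₗ[ℂ] Matrix B B ℂ) (b b' : B) (x y x2 y2 : X) (r r' : R) :
    matExt (Φ.comp (prep φ)) (pureMat (visVec p φ)) (b, (x, (x2, r))) (b', (y, (y2, r')))
      = if x = y ∧ x2 = x ∧ y2 = y then
          (p x : ℂ) * ((∑ a, φ x (a, r) * (starRingEnd ℂ) (φ x (a, r'))) * Φ (sig φ x) b b')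
        else 0 := by
  simp only [matExt, Matrix.of_apply, LinearMap.coe_comp, Function.comp_apply]
  have hprep : prep φ (Matrix.of fun u u' : A × X =>
        pureMat (visVec p φ) (u, (x, (x2, r))) (u', (y, (y2, r'))))
      = (if x = y ∧ x2 = x ∧ y2 = y then
          (p x : ℂ) * (∑ a, φ x (a, r) * (starRingEnd ℂ) (φ x (a, r'))) else 0) • sig φ x := by
    simp only [prep, LinearMap.coe_mk, AddHom.coe_mk, Matrix.of_apply]
    rw [Finset.sum_eq_single x]
    · congr 1
      by_cases hc : x = y ∧ x2 = x ∧ y2 = y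
      · obtain ⟨hc1, hc2, hc3⟩ := hc
        rw [if_pos ⟨hc1, hc2, hc3⟩]
        rw [Finset.mul_sum]
        refine Finset.sum_congr rfl fun a _ => ?_
        simp only [pureMat, visVec, Matrix.of_apply, hc2, hc3, ← hc1, eq_self_iff_true,
          and_self, if_true]
        rw [_root_.map_mul, Complex.conj_ofReal]
        rw [show ((Real.sqrt (p x) : ℝ) : ℂ) * φ x (a, r) *
          (((Real.sqrt (p x) : ℝ) : ℂ) * (starRingEnd ℂ) (φ x (a, r')))
          = (((Real.sqrt (p x) : ℝ) : ℂ) * ((Real.sqrt (p x) : ℝ) : ℂ)) *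
            (φ x (a, r) * (starRingEnd ℂ) (φ x (a, r'))) from by ring]
        rw [← Complex.ofReal_mul, Real.mul_self_sqrt (hp x)]
      · rw [if_neg hc]
        refine Finset.sum_eq_zero fun a _ => ?_
        simp only [pureMat, visVec, Matrix.of_apply]
        by_cases h1 : x2 = x
        · by_cases h2 : x = y ∧ y2 = y
          · exact absurd ⟨h2.1, h1, h2.2⟩ hc
          · simp [h2]
        · simp [h1]
    · intro w _ hw
      have hz : (∑ a : A, pureMat (visVec p φ) ((a, w), (x, (x2, r))) ((a, w), (y, (y2, r')))) = 0 := by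
        refine Finset.sum_eq_zero fun a _ => ?_
        simp [pureMat, visVec, hw]
      rw [hz, zero_smul]
    · simp
  rw [hprep, _root_.map_smul, Matrix.smul_apply, smul_eq_mul]
  by_cases hc : x = y ∧ x2 = x ∧ y2 = y
  · rw [if_pos hc, if_pos hc]
    ring
  · rw [if_neg hc, if_neg hc]
    ring

lemma margN_eq {B : Type} [Fintype A] [Fintype R] [Fintype X] [Fintype B]
    (p : X → ℝ) (hp : ∀ x, 0 ≤ p x) (φ : X → A × R → ℂ)
    (hφ : ∀ x, ∑ z, ‖φ x z‖ ^ 2 = 1)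
    (Φ : Matrix (A × X) (A × X) ℂ →ₗ[ℂ] Matrix B B ℂ) :
    visMargBX (matExt (Φ.comp (prep φ)) (pureMat (visVec p φ)))
      = visMargBX (matExt Φ (pureMat (visVec p φ))) := by
  ext ⟨b, x⟩ ⟨b', y⟩
  rw [marg_entry p hp φ Φ b b' x y]
  show ∑ x' : X, ∑ r : R, matExt (Φ.comp (prep φ)) (pureMat (visVec p φ))
    (b, (x, (x', r))) (b', (y, (x', r))) = _
  rw [Finset.sum_congr rfl fun x' _ => Finset.sum_congr rfl fun r _ =>
    tauN_entry p hp φ Φ b b' x y x' x' r r]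
  by_cases hxy : x = y
  · rw [if_pos hxy]
    rw [Finset.sum_eq_single x]
    · have hn := sum_conj_of_norm (hφ x)
      rw [Fintype.sum_prod_type] at hn
      have hn2 : (∑ r : R, ∑ a : A, φ x (a, r) * (starRingEnd ℂ) (φ x (a, r))) = 1 := by
        rw [Finset.sum_comm]
        exact hn
      have hcond : x = y ∧ x = x ∧ x = y := ⟨hxy, rfl, hxy⟩
      calc ∑ r : R, (if x = y ∧ x = x ∧ x = y then
              (p x : ℂ) * ((∑ a, φ x (a, r) * (starRingEnd ℂ) (φ x (a, r))) * Φ (sig φ x) b b')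
            else 0)
          = ∑ r : R, (∑ a, φ x (a, r) * (starRingEnd ℂ) (φ x (a, r))) *
              ((p x : ℂ) * Φ (sig φ x) b b') := by
            refine Finset.sum_congr rfl fun r _ => ?_
            rw [if_pos hcond]
            ring
        _ = (∑ r : R, ∑ a, φ x (a, r) * (starRingEnd ℂ) (φ x (a, r))) *
              ((p x : ℂ) * Φ (sig φ x) b b') := by
            rw [Finset.sum_mul]
        _ = (p x : ℂ) * Φ (sig φ x) b b' := by
            rw [hn2, one_mul]
    · intro x' _ hx'
      refine Finset.sum_eq_zero fun r _ => ?_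
      rw [if_neg]
      rintro ⟨_, h2, _⟩
      exact hx' h2
    · simp
  · rw [if_neg hxy]
    refine Finset.sum_eq_zero fun x' _ => Finset.sum_eq_zero fun r _ => ?_
    rw [if_neg]
    rintro ⟨h1, _, _⟩
    exact hxy h1

lemma trace_marg {B : Type} [Fintype A] [Fintype R] [Fintype X] [Fintype B]
    (p : X → ℝ) (hp : ∀ x, 0 ≤ p x) (hp1 : ∑ x, p x = 1) (φ : X → A × R → ℂ)
    (hφ : ∀ x, ∑ z, ‖φ x z‖ ^ 2 = 1)
    {Φ : Matrix (A × X) (A × X) ℂ →ₗ[ℂ] Matrix B B ℂ}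
    (hΦtr : ∀ M : Matrix (A × X) (A × X) ℂ, (Φ M).trace = M.trace) :
    (visMargBX (matExt Φ (pureMat (visVec p φ)))).trace = 1 := by
  simp only [Matrix.trace, Matrix.diag]
  rw [Fintype.sum_prod_type]
  rw [Finset.sum_congr rfl fun bb _ => Finset.sum_congr rfl fun x _ =>
    marg_entry p hp φ Φ bb bb x x]
  simp only [eq_self_iff_true, if_true]
  rw [Finset.sum_comm]
  have e : ∀ x : X, ∑ bb : B, (p x : ℂ) * Φ (sig φ x) bb bb = (p x : ℂ) := by
    intro x
    rw [← Finset.mul_sum]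
    have h2 := hΦtr (sig φ x)
    rw [sig_trace hφ] at h2
    simp only [Matrix.trace, Matrix.diag] at h2
    rw [h2, mul_one]
  rw [Finset.sum_congr rfl fun x _ => e x]
  exact_mod_cast hp1

lemma epset_marg_subset_tauN {B : Type} [Fintype A] [Fintype R] [Fintype X] [Fintype B]
    [DecidableEq B] [DecidableEq X]
    (p : X → ℝ) (hp : ∀ x, 0 ≤ p x) (φ : X → A × R → ℂ)
    (hφ : ∀ x, ∑ z, ‖φ x z‖ ^ 2 = 1)
    (Φ : Matrix (A × X) (A × X) ℂ →ₗ[ℂ] Matrix B B ℂ) :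
    EpSet (visMargBX (matExt Φ (pureMat (visVec p φ))))
      ⊆ EpSet (matExt (Φ.comp (prep φ)) (pureMat (visVec p φ))) := by
  rintro e ⟨A', A'', i1, i2, i3, ψ, Φ', hψ, hΦ', rfl⟩
  refine ⟨A' × A, A'', inferInstance, i2, i3,
    (fun q : B × (A' × A) × (X × (X × R)) =>
      if q.2.2.2.1 = q.2.2.1 then ψ (q.1, q.2.1.1, q.2.2.1) * φ q.2.2.1 (q.2.1.2, q.2.2.2.2)
      else 0),
    Φ'.comp (trRmap A' A), ?_, qchannel_comp hΦ' trRmap_channel, ?_⟩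
  · rintro b ⟨x, x2, r⟩ b' ⟨y, y2, r'⟩
    rw [tauN_entry p hp φ Φ b b' x y x2 y2 r r']
    rw [Fintype.sum_prod_type]
    have hmarg := hψ b x b' y
    rw [marg_entry p hp φ Φ b b' x y] at hmarg
    by_cases h1 : x2 = x
    · by_cases h2 : y2 = y
      · simp only [h1, h2, eq_self_iff_true, if_true, and_true]
        have key : (∑ c : A', ∑ a : A,
              (ψ (b, c, x) * φ x (a, r)) * (starRingEnd ℂ) (ψ (b', c, y) * φ y (a, r')))
            = (∑ c : A', ψ (b, c, x) * (starRingEnd ℂ) (ψ (b', c, y))) *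
              (∑ a : A, φ x (a, r) * (starRingEnd ℂ) (φ y (a, r'))) := by
          rw [Finset.sum_mul_sum]
          refine Finset.sum_congr rfl fun c _ => Finset.sum_congr rfl fun a _ => ?_
          rw [_root_.map_mul]
          ring
        rw [key, ← hmarg]
        by_cases hxy : x = y
        · rw [if_pos hxy, if_pos hxy, ← hxy]
          ring
        · rw [if_neg hxy, if_neg hxy, zero_mul]
      · rw [if_neg fun h => h2 h.2.2]
        symm
        refine Finset.sum_eq_zero fun c _ => Finset.sum_eq_zero fun a _ => ?_
        simp [h2]
    · rw [if_neg fun h => h1 h.2.1]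
      symm
      refine Finset.sum_eq_zero fun c _ => Finset.sum_eq_zero fun a _ => ?_
      simp [h1]
  · congr 1
    ext ⟨b, c⟩ ⟨b', c'⟩
    simp only [epOut, Matrix.of_apply, LinearMap.coe_comp, Function.comp_apply]
    rw [Fintype.sum_prod_type]
    refine Finset.sum_congr rfl fun x _ => ?_
    rw [Fintype.sum_prod_type]
    rw [Finset.sum_eq_single x]
    · have hblk : ∀ rr : R, trRmap A' A (Matrix.of fun u u' : A' × A =>
          (if x = x then ψ (b, u.1, x) * φ x (u.2, rr) else 0) *
          (starRingEnd ℂ) (if x = x then ψ (b', u'.1, x) * φ x (u'.2, rr) else 0))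
          = (∑ a : A, φ x (a, rr) * (starRingEnd ℂ) (φ x (a, rr))) •
            (Matrix.of fun c1 c2 : A' => ψ (b, c1, x) * (starRingEnd ℂ) (ψ (b', c2, x))) := by
        intro rr
        ext c1 c2
        simp only [trRmap, LinearMap.coe_mk, AddHom.coe_mk, ptraceRight, Matrix.of_apply,
          eq_self_iff_true, if_true, Matrix.smul_apply, smul_eq_mul]
        calc ∑ a : A, (ψ (b, c1, x) * φ x (a, rr)) * (starRingEnd ℂ) (ψ (b', c2, x) * φ x (a, rr))
            = ∑ a : A, (φ x (a, rr) * (starRingEnd ℂ) (φ x (a, rr))) *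
                (ψ (b, c1, x) * (starRingEnd ℂ) (ψ (b', c2, x))) := by
              refine Finset.sum_congr rfl fun a _ => ?_
              rw [_root_.map_mul]
              ring
          _ = (∑ a : A, φ x (a, rr) * (starRingEnd ℂ) (φ x (a, rr))) *
                (ψ (b, c1, x) * (starRingEnd ℂ) (ψ (b', c2, x))) := by
              rw [Finset.sum_mul]
      have hn := sum_conj_of_norm (hφ x)
      rw [Fintype.sum_prod_type] at hn
      have hn2 : (∑ rr : R, ∑ a : A, φ x (a, rr) * (starRingEnd ℂ) (φ x (a, rr))) = 1 := by
        rw [Finset.sum_comm]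
        exact hn
      symm
      calc ∑ rr : R, Φ' (trRmap A' A (Matrix.of fun u u' : A' × A =>
              (if x = x then ψ (b, u.1, x) * φ x (u.2, rr) else 0) *
              (starRingEnd ℂ) (if x = x then ψ (b', u'.1, x) * φ x (u'.2, rr) else 0))) c c'
          = ∑ rr : R, (∑ a : A, φ x (a, rr) * (starRingEnd ℂ) (φ x (a, rr))) *
              Φ' (Matrix.of fun c1 c2 : A' =>
                ψ (b, c1, x) * (starRingEnd ℂ) (ψ (b', c2, x))) c c' := by
            refine Finset.sum_congr rfl fun rr _ => ?_
            rw [hblk rr, _root_.map_smul, Matrix.smul_apply, smul_eq_mul]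
        _ = (∑ rr : R, ∑ a : A, φ x (a, rr) * (starRingEnd ℂ) (φ x (a, rr))) *
              Φ' (Matrix.of fun c1 c2 : A' =>
                ψ (b, c1, x) * (starRingEnd ℂ) (ψ (b', c2, x))) c c' := by
            rw [Finset.sum_mul]
        _ = Φ' (Matrix.of fun c1 c2 : A' =>
              ψ (b, c1, x) * (starRingEnd ℂ) (ψ (b', c2, x))) c c' := by
            rw [hn2, one_mul]
    · intro x2 _ hx2
      refine Finset.sum_eq_zero fun rr _ => ?_
      have hz : (Matrix.of fun u u' : A' × A =>
          (if x2 = x then ψ (b, u.1, x) * φ x (u.2, rr) else 0) *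
          (starRingEnd ℂ) (if x2 = x then ψ (b', u'.1, x) * φ x (u'.2, rr) else 0)) = 0 := by
        ext u1 u2
        simp [hx2]
      rw [hz, map_zero, map_zero]
      simp
    · simp

end VisAux

open VisAux in
/-- in visible compression, the optimal entanglement of purification
between the output and the full reference `X X' R` equals the one between the output
and `X` alone, under the same distortion constraints on the `BX` marginal. -/
theorem visible_ep_simplification
    [Fintype A] [DecidableEq A] [Fintype R] [DecidableEq R]
    [Fintype B] [DecidableEq B] [Fintype X] [DecidableEq X]
    (p : X → ℝ) (hp : ∀ x, 0 ≤ p x) (hp1 : ∑ x, p x = 1)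
    (φ : X → A × R → ℂ) (hφ : ∀ x, ∑ z, ‖φ x z‖ ^ 2 = 1)
    (Δ : Matrix (B × X) (B × X) ℂ → ℝ) (D : ℝ) :
    sInf { e : ℝ | ∃ Φ : Matrix (A × X) (A × X) ℂ →ₗ[ℂ] Matrix B B ℂ,
        IsQChannel Φ ∧ Δ (visMargBX (matExt Φ (pureMat (visVec p φ)))) ≤ D ∧
        e = Ep (matExt Φ (pureMat (visVec p φ))) }
      = sInf { e : ℝ | ∃ Φ : Matrix (A × X) (A × X) ℂ →ₗ[ℂ] Matrix B B ℂ,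
        IsQChannel Φ ∧ Δ (visMargBX (matExt Φ (pureMat (visVec p φ)))) ≤ D ∧
        e = Ep (visMargBX (matExt Φ (pureMat (visVec p φ)))) } := by
  classical
  by_cases hex : ∃ Φ : Matrix (A × X) (A × X) ℂ →ₗ[ℂ] Matrix B B ℂ,
      IsQChannel Φ ∧ Δ (visMargBX (matExt Φ (pureMat (visVec p φ)))) ≤ D
  · obtain ⟨Φ₀, hΦ₀, hD₀⟩ := hex
    have traceF : ∀ Φ : Matrix (A × X) (A × X) ℂ →ₗ[ℂ] Matrix B B ℂ, IsQChannel Φ →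
        (matExt Φ (pureMat (visVec p φ))).trace = 1 := by
      intro Φ hΦ
      rw [← trace_visMargBX]
      exact trace_marg p hp hp1 φ hφ hΦ.2
    have traceG : ∀ Φ : Matrix (A × X) (A × X) ℂ →ₗ[ℂ] Matrix B B ℂ, IsQChannel Φ →
        (visMargBX (matExt Φ (pureMat (visVec p φ)))).trace = 1 :=
      fun Φ hΦ => trace_marg p hp hp1 φ hφ hΦ.2
    have psdF : ∀ Φ : Matrix (A × X) (A × X) ℂ →ₗ[ℂ] Matrix B B ℂ, IsQChannel Φ →
        (matExt Φ (pureMat (visVec p φ))).PosSemidef :=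
      fun Φ hΦ => hΦ.1 _ _ (pureMat_psd _)
    have key1 : ∀ Φ : Matrix (A × X) (A × X) ℂ →ₗ[ℂ] Matrix B B ℂ, IsQChannel Φ →
        Ep (visMargBX (matExt Φ (pureMat (visVec p φ))))
          ≤ Ep (matExt Φ (pureMat (visVec p φ))) := by
      intro Φ hΦ
      rw [Ep_eq_sInf, Ep_eq_sInf]
      exact csInf_le_csInf (EpSet_bdd (traceG Φ hΦ)) (EpSet_nonempty (psdF Φ hΦ))
        (epset_full_subset_marg _)
    have key2 : ∀ Φ : Matrix (A × X) (A × X) ℂ →ₗ[ℂ] Matrix B B ℂ, IsQChannel Φ →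
        Ep (matExt (Φ.comp (prep φ)) (pureMat (visVec p φ)))
          ≤ Ep (visMargBX (matExt Φ (pureMat (visVec p φ)))) := by
      intro Φ hΦ
      rw [Ep_eq_sInf, Ep_eq_sInf]
      exact csInf_le_csInf (EpSet_bdd (traceF _ (qchannel_comp hΦ (prep_qchannel hφ))))
        (EpSet_nonempty (visMargBX_psd (psdF Φ hΦ))) (epset_marg_subset_tauN p hp φ hφ Φ)
    have bdd1 : BddBelow { e : ℝ | ∃ Φ : Matrix (A × X) (A × X) ℂ →ₗ[ℂ] Matrix B B ℂ,
        IsQChannel Φ ∧ Δ (visMargBX (matExt Φ (pureMat (visVec p φ)))) ≤ D ∧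
        e = Ep (matExt Φ (pureMat (visVec p φ))) } := by
      refine ⟨0, ?_⟩
      rintro e ⟨Φ, hΦ, _, rfl⟩
      exact Ep_nonneg (traceF Φ hΦ)
    have bdd2 : BddBelow { e : ℝ | ∃ Φ : Matrix (A × X) (A × X) ℂ →ₗ[ℂ] Matrix B B ℂ,
        IsQChannel Φ ∧ Δ (visMargBX (matExt Φ (pureMat (visVec p φ)))) ≤ D ∧
        e = Ep (visMargBX (matExt Φ (pureMat (visVec p φ)))) } := by
      refine ⟨0, ?_⟩
      rintro e ⟨Φ, hΦ, _, rfl⟩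
      exact Ep_nonneg (traceG Φ hΦ)
    apply le_antisymm
    · refine le_csInf ⟨_, Φ₀, hΦ₀, hD₀, rfl⟩ ?_
      rintro e ⟨Φ, hΦ, hD', rfl⟩
      have hmem : Ep (matExt (Φ.comp (prep φ)) (pureMat (visVec p φ)))
          ∈ { e : ℝ | ∃ Φ : Matrix (A × X) (A × X) ℂ →ₗ[ℂ] Matrix B B ℂ,
            IsQChannel Φ ∧ Δ (visMargBX (matExt Φ (pureMat (visVec p φ)))) ≤ D ∧
            e = Ep (matExt Φ (pureMat (visVec p φ))) } := by
        refine ⟨Φ.comp (prep φ), qchannel_comp hΦ (prep_qchannel hφ), ?_, rfl⟩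
        rw [margN_eq p hp φ hφ Φ]
        exact hD'
      exact le_trans (csInf_le bdd1 hmem) (key2 Φ hΦ)
    · refine le_csInf ⟨_, Φ₀, hΦ₀, hD₀, rfl⟩ ?_
      rintro e ⟨Φ, hΦ, hD', rfl⟩
      have hmem : Ep (visMargBX (matExt Φ (pureMat (visVec p φ))))
          ∈ { e : ℝ | ∃ Φ : Matrix (A × X) (A × X) ℂ →ₗ[ℂ] Matrix B B ℂ,
            IsQChannel Φ ∧ Δ (visMargBX (matExt Φ (pureMat (visVec p φ)))) ≤ D ∧
            e = Ep (visMargBX (matExt Φ (pureMat (visVec p φ)))) } := ⟨Φ, hΦ, hD', rfl⟩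
      exact le_trans (csInf_le bdd2 hmem) (key1 Φ hΦ)
  · have h1 : { e : ℝ | ∃ Φ : Matrix (A × X) (A × X) ℂ →ₗ[ℂ] Matrix B B ℂ,
        IsQChannel Φ ∧ Δ (visMargBX (matExt Φ (pureMat (visVec p φ)))) ≤ D ∧
        e = Ep (matExt Φ (pureMat (visVec p φ))) } = ∅ := by
      ext e
      simp only [Set.mem_setOf_eq, Set.mem_empty_iff_false, iff_false]
      rintro ⟨Φ, hΦ, hD', _⟩
      exact hex ⟨Φ, hΦ, hD'⟩
    have h2 : { e : ℝ | ∃ Φ : Matrix (A × X) (A × X) ℂ →ₗ[ℂ] Matrix B B ℂ,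
        IsQChannel Φ ∧ Δ (visMargBX (matExt Φ (pureMat (visVec p φ)))) ≤ D ∧
        e = Ep (visMargBX (matExt Φ (pureMat (visVec p φ)))) } = ∅ := by
      ext e
      simp only [Set.mem_setOf_eq, Set.mem_empty_iff_false, iff_false]
      rintro ⟨Φ, hΦ, hD', _⟩
      exact hex ⟨Φ, hΦ, hD'⟩
    rw [h1, h2]
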